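/- Suppose C, H : V → V are symmetric linear operators with C ≥ α_C · Id and H ≥ α_H · Id for positive constants α_C, α_H, let d > 0, and define F(Q) := C Q + H Q + d ∇h_γ(Q − P) for a fixed P ∈ V. Then F is strongly monotone: (F(Q₁) − F(Q₂)) · (Q₁ − Q₂) ≥ (α_C + α_H) |Q₁ − Q₂|² for all Q₁, Q₂ ∈ V. -/

import Mathlib

/-!
`F` is the sum of the coercive operators `C` and `H` and of `d` times the gradient of the convex
function `Q ↦ √(‖Q - P‖² + 1/γ²)`, which is monotone. Monotonicity of that gradient reduces, via
Cauchy–Schwarz, to `(‖x‖ - ‖y‖) (φ ‖x‖ - φ ‖y‖) ≥ 0` for the increasing function `φ t = t / √(t² + c)`.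
-/

open scoped RealInnerProductSpace

section SmoothNorm

variable {V : Type*} [NormedAddCommGroup V] [InnerProductSpace ℝ V] {c : ℝ}

/-- The gradient of the smoothed norm `x ↦ √(‖x‖² + c)`. -/
noncomputable def smoothNormGrad (c : ℝ) (x : V) : V :=
  (√(‖x‖ ^ 2 + c))⁻¹ • x

lemma monotoneOn_div_sqrt_sq_add (hc : 0 ≤ c) :
    MonotoneOn (fun t : ℝ => t / √(t ^ 2 + c)) (Set.Ici 0) := by
  intro s (hs : 0 ≤ s) t (ht : 0 ≤ t) hst
  rcases hs.eq_or_lt with rfl | hs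
  · simp only [zero_div]
    positivity
  have hsq : s * √(t ^ 2 + c) ≤ t * √(s ^ 2 + c) := by
    calc s * √(t ^ 2 + c) = √(s ^ 2 * (t ^ 2 + c)) := by
          rw [Real.sqrt_mul (sq_nonneg _), Real.sqrt_sq hs.le]
      _ ≤ √(t ^ 2 * (s ^ 2 + c)) :=
          Real.sqrt_le_sqrt (by nlinarith [mul_le_mul hst hst hs.le ht])
      _ = t * √(s ^ 2 + c) := by rw [Real.sqrt_mul (sq_nonneg _), Real.sqrt_sq ht]
  rwa [div_le_div_iff₀ (Real.sqrt_pos.2 (by positivity))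
    (Real.sqrt_pos.2 (by have := hs.trans_le hst; positivity))]

lemma inner_smoothNormGrad_sub_nonneg (hc : 0 ≤ c) (x y : V) :
    0 ≤ ⟪smoothNormGrad c x - smoothNormGrad c y, x - y⟫ := by
  set a := (√(‖x‖ ^ 2 + c))⁻¹
  set b := (√(‖y‖ ^ 2 + c))⁻¹
  have hφ : 0 ≤ (‖x‖ - ‖y‖) * (‖x‖ * a - ‖y‖ * b) := by
    have hmono := monotoneOn_div_sqrt_sq_add hc
    rcases le_total ‖x‖ ‖y‖ with h | h
    · exact mul_nonneg_of_nonpos_of_nonpos (sub_nonpos.2 h) <|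
        sub_nonpos.2 (hmono (norm_nonneg x) (norm_nonneg y) h)
    · exact mul_nonneg (sub_nonneg.2 h) <|
        sub_nonneg.2 (hmono (norm_nonneg y) (norm_nonneg x) h)
  have hcs : ⟪x, y⟫ * (a + b) ≤ ‖x‖ * ‖y‖ * (a + b) :=
    mul_le_mul_of_nonneg_right (real_inner_le_norm x y) (by positivity)
  have hexpand : ⟪smoothNormGrad c x - smoothNormGrad c y, x - y⟫
      = a * ‖x‖ ^ 2 + b * ‖y‖ ^ 2 - ⟪x, y⟫ * (a + b) := by
    simp only [smoothNormGrad, inner_sub_left, inner_sub_right, real_inner_smul_left,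
      real_inner_self_eq_norm_sq, real_inner_comm x y]
    ring
  rw [hexpand]
  nlinarith

end SmoothNorm

theorem F_strongly_monotone_general
    {V : Type*} [NormedAddCommGroup V] [InnerProductSpace ℝ V]
    (γ : ℝ) (P : V) (C H : V →ₗ[ℝ] V)
    (αC αH : ℝ)
    (hCcoer : ∀ E : V, αC * ‖E‖ ^ 2 ≤ ⟪C E, E⟫)
    (hHcoer : ∀ E : V, αH * ‖E‖ ^ 2 ≤ ⟪H E, E⟫)
    (d : ℝ) (hd : 0 < d)
    (F : V → V)
    (hF : ∀ Q : V, F Q = C Q + H Q +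
        d • ((Real.sqrt (‖Q - P‖ ^ 2 + 1 / γ ^ 2))⁻¹ • (Q - P))) :
    ∀ Q₁ Q₂ : V, (αC + αH) * ‖Q₁ - Q₂‖ ^ 2 ≤ ⟪F Q₁ - F Q₂, Q₁ - Q₂⟫ := by
  intro Q₁ Q₂
  set g : V → V := smoothNormGrad (1 / γ ^ 2)
  have hFsub : F Q₁ - F Q₂
      = C (Q₁ - Q₂) + H (Q₁ - Q₂) + d • (g (Q₁ - P) - g (Q₂ - P)) := by
    simp only [hF, g, smoothNormGrad, map_sub]
    module
  have hg : 0 ≤ ⟪g (Q₁ - P) - g (Q₂ - P), Q₁ - Q₂⟫ := by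
    simpa only [sub_sub_sub_cancel_right] using
      inner_smoothNormGrad_sub_nonneg (by positivity) (Q₁ - P) (Q₂ - P)
  rw [hFsub, inner_add_left, inner_add_left, real_inner_smul_left]
  linarith [hCcoer (Q₁ - Q₂), hHcoer (Q₁ - Q₂), mul_nonneg hd.le hg]

theorem F_strongly_monotone
    {V : Type*} [NormedAddCommGroup V] [InnerProductSpace ℝ V] [FiniteDimensional ℝ V]
    (γ : ℝ) (hγ : 0 < γ) (P : V) (C H : V →ₗ[ℝ] V)
    (hCsym : ∀ x y : V, ⟪C x, y⟫ = ⟪x, C y⟫)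
    (hHsym : ∀ x y : V, ⟪H x, y⟫ = ⟪x, H y⟫)
    (αC αH : ℝ) (hαC : 0 < αC) (hαH : 0 < αH)
    (hCcoer : ∀ E : V, αC * ‖E‖ ^ 2 ≤ ⟪C E, E⟫)
    (hHcoer : ∀ E : V, αH * ‖E‖ ^ 2 ≤ ⟪H E, E⟫)
    (d : ℝ) (hd : 0 < d)
    (F : V → V)
    (hF : ∀ Q : V, F Q = C Q + H Q +
        d • ((Real.sqrt (‖Q - P‖ ^ 2 + 1 / γ ^ 2))⁻¹ • (Q - P))) :
    ∀ Q₁ Q₂ : V, (αC + αH) * ‖Q₁ - Q₂‖ ^ 2 ≤ ⟪F Q₁ - F Q₂, Q₁ - Q₂⟫ :=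
  F_strongly_monotone_general γ P C H αC αH hCcoer hHcoer d hd F hF
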